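/- arXiv:2206.04878 — 6 statements merged into one kernel-verified Lean document; each statement's English description precedes it below -/
import Mathlib

section
/- If X is an infinite-dimensional real Hilbert space, then the weak closure of C_α = {(x,y,γ) ∈ X × X × ℝ : ⟨x,y⟩ = αγ} is all of X × X × ℝ. -/
/-!
An orthonormal sequence `e n` tends weakly to `0`: for inner products this is Bessel's inequality,
and every continuous functional is an inner product once we pass to the completion. Given
`(x, y, γ)`, the point `(x + t n • e n, y + e n, γ)` lies in `C_α` for
`t n = (α γ - ⟪x, y⟫ - ⟪x, e n⟫) / (⟪y, e n⟫ + 1)`, and since `t n` converges, these points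
converge weakly to `(x, y, γ)`.
-/

open Filter Topology UniformSpace

section Orthonormal

variable {𝕜 E ι : Type*} [RCLike 𝕜] [NormedAddCommGroup E] [InnerProductSpace 𝕜 E] {e : ι → E}

theorem exists_orthonormal_nat_of_not_finiteDimensional (hE : ¬ FiniteDimensional 𝕜 E) :
    ∃ e : ℕ → E, Orthonormal 𝕜 e := by
  let b := Module.Basis.ofVectorSpace 𝕜 E
  have : Infinite (Module.Basis.ofVectorSpaceIndex 𝕜 E) := by
    rw [← not_finite_iff_infinite]
    exact fun _ => hE (Module.Finite.of_basis b)
  let emb := Infinite.natEmbedding (Module.Basis.ofVectorSpaceIndex 𝕜 E)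
  exact ⟨InnerProductSpace.gramSchmidtNormed 𝕜 (b ∘ emb),
    InnerProductSpace.gramSchmidtNormed_orthonormal (b.linearIndependent.comp emb emb.injective)⟩

theorem Orthonormal.tendsto_inner_cofinite_zero (he : Orthonormal 𝕜 e) (x : E) :
    Tendsto (fun i => inner 𝕜 x (e i)) cofinite (𝓝 0) := by
  have hsq := (he.inner_products_summable x).tendsto_cofinite_zero
  rw [tendsto_zero_iff_norm_tendsto_zero]
  simpa [norm_inner_symm] using hsq.sqrt

theorem Orthonormal.tendsto_dual_cofinite_zero_of_completeSpace [CompleteSpace E]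
    (he : Orthonormal 𝕜 e) (f : StrongDual 𝕜 E) :
    Tendsto (fun i => f (e i)) cofinite (𝓝 0) := by
  simpa only [InnerProductSpace.toDual_symm_apply] using
    he.tendsto_inner_cofinite_zero ((InnerProductSpace.toDual 𝕜 E).symm f)

theorem Orthonormal.tendsto_dual_cofinite_zero (he : Orthonormal 𝕜 e) (f : StrongDual 𝕜 E) :
    Tendsto (fun i => f (e i)) cofinite (𝓝 0) := by
  have hdense : DenseRange (Completion.toComplL : E →L[𝕜] Completion E) := by
    rw [Completion.coe_toComplL]; exact Completion.denseRange_coe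
  have hind : IsUniformInducing (Completion.toComplL : E →L[𝕜] Completion E) := by
    rw [Completion.coe_toComplL]; exact Completion.isUniformInducing_coe E
  have hf (x : E) : f.extend Completion.toComplL (x : Completion E) = f x := by
    simpa only [Completion.coe_toComplL] using ContinuousLinearMap.extend_eq f hdense hind x
  simpa only [Function.comp_apply, Completion.coe_toComplₗᵢ, hf] using
    (he.comp_linearIsometry Completion.toComplₗᵢ).tendsto_dual_cofinite_zero_of_completeSpace
      (f.extend Completion.toComplL)

theorem Orthonormal.tendsto_toWeakSpace_cofinite_zero (he : Orthonormal 𝕜 e) :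
    Tendsto (fun i => toWeakSpace 𝕜 E (e i)) cofinite (𝓝 0) := by
  refine (WeakBilin.tendsto_iff_forall_eval_tendsto _
    (separatingDual_iff_injective.mp inferInstance)).mpr fun f => ?_
  show Tendsto (fun i => f (e i)) cofinite (𝓝 (f 0))
  simpa only [map_zero] using he.tendsto_dual_cofinite_zero f

end Orthonormal

theorem tendsto_toWeakSpace_add_smul_add {E F α : Type*} [NormedAddCommGroup E]
    [NormedSpace ℝ E] [NormedAddCommGroup F] [NormedSpace ℝ F] {l : Filter α} {u : α → E}
    {t : α → ℝ} {c : ℝ} (hu : Tendsto (fun n => toWeakSpace ℝ E (u n)) l (𝓝 0))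
    (ht : Tendsto t l (𝓝 c)) (x y : E) (z : F) :
    Tendsto (fun n => toWeakSpace ℝ (E × E × F) (x + t n • u n, y + u n, z)) l
      (𝓝 (toWeakSpace ℝ (E × E × F) (x, y, z))) := by
  let L₁ : E →L[ℝ] E × E × F := ContinuousLinearMap.inl ℝ E (E × F)
  let L₂ : E →L[ℝ] E × E × F :=
    (ContinuousLinearMap.inr ℝ E (E × F)).comp (ContinuousLinearMap.inl ℝ E F)
  have hsplit (n : α) : toWeakSpace ℝ (E × E × F) (x + t n • u n, y + u n, z) =
      toWeakSpace ℝ _ (x, y, z) + t n • WeakSpace.map L₁ (toWeakSpace ℝ E (u n)) +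
        WeakSpace.map L₂ (toWeakSpace ℝ E (u n)) := by
    change ((x + t n • u n, y + u n, z) : E × E × F) = (x, y, z) + t n • L₁ (u n) + L₂ (u n)
    simp [L₁, L₂]
  have hlim := ((tendsto_const_nhds (x := toWeakSpace ℝ _ (x, y, z))).add
    (ht.smul (((WeakSpace.map L₁).continuous.tendsto 0).comp hu))).add
    (((WeakSpace.map L₂).continuous.tendsto 0).comp hu)
  simp only [map_zero, smul_zero, add_zero] at hlim
  exact hlim.congr fun n => (hsplit n).symm

theorem real_inner_add_smul_add_eq {X : Type*} [NormedAddCommGroup X] [InnerProductSpace ℝ X]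
    {e : X} (he : ‖e‖ = 1) {x y : X} {t c : ℝ}
    (ht : t * (inner ℝ y e + 1) = c - inner ℝ x y - inner ℝ x e) :
    inner ℝ (x + t • e) (y + e) = c := by
  rw [inner_add_left, inner_add_right, inner_add_right, real_inner_smul_left,
    real_inner_smul_left, real_inner_self_eq_norm_sq, he, real_inner_comm y e]
  linear_combination ht

variable {X : Type*} [NormedAddCommGroup X] [InnerProductSpace ℝ X]

/-- The set `C_α`. -/
def Cα (α : ℝ) : Set (X × X × ℝ) := {p | (inner ℝ p.1 p.2.1 : ℝ) = α * p.2.2}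

theorem stmt1_general (hX : ¬ FiniteDimensional ℝ X) (α : ℝ) :
    closure (show Set (WeakSpace ℝ (X × X × ℝ)) from Cα α) = Set.univ := by
  obtain ⟨e, he⟩ := exists_orthonormal_nat_of_not_finiteDimensional (𝕜 := ℝ) hX
  refine Set.eq_univ_of_forall fun ⟨x, y, γ⟩ => ?_
  have hinner (v : X) : Tendsto (fun n => inner ℝ v (e n)) atTop (𝓝 0) := by
    simpa only [Nat.cofinite_eq_atTop] using he.tendsto_inner_cofinite_zero v
  have hden : Tendsto (fun n => inner ℝ y (e n) + 1) atTop (𝓝 1) := by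
    simpa only [zero_add] using (hinner y).add_const 1
  set t : ℕ → ℝ := fun n => (α * γ - inner ℝ x y - inner ℝ x (e n)) / (inner ℝ y (e n) + 1)
  have ht : Tendsto t atTop (𝓝 (α * γ - inner ℝ x y)) := by
    have h := ((tendsto_const_nhds (x := α * γ - inner ℝ x y)).sub (hinner x)).div hden one_ne_zero
    rwa [sub_zero, div_one] at h
  have hmem : ∀ᶠ n in atTop, (x + t n • e n, y + e n, γ) ∈ Cα α := by
    filter_upwards [hden.eventually_ne one_ne_zero] with n hn
    exact real_inner_add_smul_add_eq (he.1 n) (div_mul_cancel₀ _ hn)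
  have hweak : Tendsto (fun n => toWeakSpace ℝ X (e n)) atTop (𝓝 0) := by
    simpa only [Nat.cofinite_eq_atTop] using he.tendsto_toWeakSpace_cofinite_zero
  exact mem_closure_of_tendsto (tendsto_toWeakSpace_add_smul_add hweak ht x y γ) hmem

theorem stmt1 (hX : ¬ FiniteDimensional ℝ X) (α : ℝ) (hα : α ≠ 0) :
    closure (show Set (WeakSpace ℝ (X × X × ℝ)) from Cα α) = Set.univ :=
  stmt1_general hX α
end

section
/- For every (u₀, v₀, γ₀) ∈ X × X × ℝ, the set of minimizers of f(u,v,γ) = ‖u−u₀‖² + ‖v−v₀‖² + β²|γ−γ₀|² subject to ‖u‖² − ‖v‖² = 2αγ is nonempty; that is, the projection of any point onto C̃_α is nonempty. -/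
variable {X : Type*} [NormedAddCommGroup X] [InnerProductSpace ℝ X]

/-- Squared β-weighted distance on `X × X × ℝ`. -/
noncomputable def d2 (β : ℝ) (p q : X × X × ℝ) : ℝ :=
  ‖p.1 - q.1‖^2 + ‖p.2.1 - q.2.1‖^2 + β^2 * (p.2.2 - q.2.2)^2

/-- The set of nearest points of `S` to `z` in the β-weighted norm. -/
noncomputable def projSet (β : ℝ) (S : Set (X × X × ℝ)) (z : X × X × ℝ) :
    Set (X × X × ℝ) :=
  {p | p ∈ S ∧ ∀ q ∈ S, d2 β p z ≤ d2 β q z}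

/-- The set `C̃_α`. -/
def Ctilde (α : ℝ) : Set (X × X × ℝ) := {p | ‖p.1‖^2 - ‖p.2.1‖^2 = 2 * α * p.2.2}

/-!
Since `α ≠ 0`, the constraint determines `γ`, and the objective sees `u` and `v` only through
their norms: `(‖u‖ - ‖u₀‖)² ≤ ‖u - u₀‖²`, with equality when `u` is a nonnegative multiple of `u₀`.
So the problem reduces to minimizing a continuous function of `(‖u‖, ‖v‖)` with bounded sublevel
sets over the closed quadrant of `ℝ²`, which attains its minimum; a minimizer lifts back to `X`
whenever `X ≠ 0`, and if `X = 0` then `C̃_α` is a single point.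
-/

open Set Filter

theorem ContinuousOn.exists_isMinOn_of_isBounded {E : Type*} [PseudoMetricSpace E]
    [ProperSpace E] {f : E → ℝ} {s : Set E} (hf : ContinuousOn f s) (hs : IsClosed s)
    {x₀ : E} (h₀ : x₀ ∈ s) (hb : Bornology.IsBounded {x ∈ s | f x ≤ f x₀}) :
    ∃ x ∈ s, IsMinOn f s x := by
  refine hf.exists_isMinOn' hs h₀ ?_
  filter_upwards [mem_inf_of_left hb.isCompact_closure.compl_mem_cocompact,
    mem_inf_of_right (mem_principal_self s)] with x hxB hxs
  by_contra hlt
  exact hxB (subset_closure ⟨hxs, (not_le.1 hlt).le⟩)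

theorem exists_norm_eq_norm_sub_eq_abs {E : Type*} [NormedAddCommGroup E] [NormedSpace ℝ E]
    [Nontrivial E] (w : E) {r : ℝ} (hr : 0 ≤ r) : ∃ u : E, ‖u‖ = r ∧ ‖u - w‖ = |r - ‖w‖| := by
  rcases eq_or_ne w 0 with rfl | hw
  · obtain ⟨u, hu⟩ := exists_norm_eq E hr
    exact ⟨u, hu, by simp [hu, abs_of_nonneg hr]⟩
  · have hw' : 0 < ‖w‖ := norm_pos_iff.2 hw
    refine ⟨(r / ‖w‖) • w, ?_, ?_⟩
    · rw [norm_smul, Real.norm_of_nonneg (by positivity), div_mul_cancel₀ _ hw'.ne']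
    · calc ‖(r / ‖w‖) • w - w‖ = ‖(r / ‖w‖ - 1) • w‖ := by rw [sub_smul, one_smul]
        _ = |(r / ‖w‖ - 1) * ‖w‖| := by rw [norm_smul, Real.norm_eq_abs, abs_mul, abs_norm]
        _ = |r - ‖w‖| := by rw [sub_one_mul, div_mul_cancel₀ _ hw'.ne']

noncomputable def reducedDist (α β a b γ₀ : ℝ) (q : ℝ × ℝ) : ℝ :=
  (q.1 - a)^2 + (q.2 - b)^2 + β^2 * ((q.1^2 - q.2^2) / (2 * α) - γ₀)^2

theorem exists_isMinOn_reducedDist (α β a b γ₀ : ℝ) :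
    ∃ q ∈ Ici (0 : ℝ) ×ˢ Ici 0, IsMinOn (reducedDist α β a b γ₀) (Ici 0 ×ˢ Ici 0) q := by
  set M := reducedDist α β a b γ₀ (0, 0)
  refine ContinuousOn.exists_isMinOn_of_isBounded (by unfold reducedDist; fun_prop)
    (isClosed_Ici.prod isClosed_Ici) (x₀ := (0, 0)) ⟨le_refl (0 : ℝ), le_refl (0 : ℝ)⟩
    (Metric.isBounded_closedBall (x := (a, b)) (r := √M) |>.subset ?_)
  rintro ⟨r, s⟩ ⟨-, hM⟩
  have hM : (r - a)^2 + (s - b)^2 + β^2 * ((r^2 - s^2) / (2 * α) - γ₀)^2 ≤ M := hM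
  have hγ : 0 ≤ β^2 * ((r^2 - s^2) / (2 * α) - γ₀)^2 := by positivity
  rw [Metric.mem_closedBall, Prod.dist_eq, Real.dist_eq, Real.dist_eq, max_le_iff]
  exact ⟨Real.abs_le_sqrt (by nlinarith [sq_nonneg (s - b)]),
    Real.abs_le_sqrt (by nlinarith [sq_nonneg (r - a)])⟩

theorem reducedDist_le_d2 {E : Type*} [NormedAddCommGroup E] {α : ℝ} (hα : α ≠ 0) (β : ℝ)
    {p : E × E × ℝ} (hp : p ∈ Ctilde α) (z : E × E × ℝ) :
    reducedDist α β ‖z.1‖ ‖z.2.1‖ z.2.2 (‖p.1‖, ‖p.2.1‖) ≤ d2 β p z := by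
  have hγ : (‖p.1‖^2 - ‖p.2.1‖^2) / (2 * α) = p.2.2 := by
    rw [hp.out]; field_simp
  have hsq (x y : E) : (‖x‖ - ‖y‖)^2 ≤ ‖x - y‖^2 :=
    sq_le_sq' (abs_le.1 (abs_norm_sub_norm_le x y)).1 (abs_le.1 (abs_norm_sub_norm_le x y)).2
  unfold reducedDist d2
  rw [hγ]
  gcongr ?_ + ?_ + _ <;> apply hsq

theorem exists_mem_Ctilde_d2_eq_reducedDist [Nontrivial X] {α : ℝ} (hα : α ≠ 0) (β : ℝ)
    (z : X × X × ℝ) {q : ℝ × ℝ} (hq : q ∈ Ici (0 : ℝ) ×ˢ Ici 0) :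
    ∃ p ∈ Ctilde α, d2 β p z = reducedDist α β ‖z.1‖ ‖z.2.1‖ z.2.2 q := by
  obtain ⟨u, hu, hud⟩ := exists_norm_eq_norm_sub_eq_abs z.1 hq.1
  obtain ⟨v, hv, hvd⟩ := exists_norm_eq_norm_sub_eq_abs z.2.1 hq.2
  refine ⟨(u, v, (q.1^2 - q.2^2) / (2 * α)), ?_, ?_⟩
  · change ‖u‖^2 - ‖v‖^2 = 2 * α * ((q.1^2 - q.2^2) / (2 * α))
    rw [hu, hv]; field_simp
  · simp only [d2, reducedDist, hud, hvd, sq_abs]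

theorem Ctilde_eq_singleton_zero {E : Type*} [NormedAddCommGroup E] [Subsingleton E] {α : ℝ}
    (hα : α ≠ 0) : Ctilde α = ({0} : Set (E × E × ℝ)) := by
  ext ⟨u, v, γ⟩
  simp [Ctilde, Subsingleton.elim u 0, Subsingleton.elim v 0, hα]

theorem stmt5_general (α β : ℝ) (hα : α ≠ 0) (u₀ v₀ : X) (γ₀ : ℝ) :
    (projSet β (Ctilde α) (u₀, v₀, γ₀)).Nonempty := by
  rcases subsingleton_or_nontrivial X with hX | hX
  · rw [Ctilde_eq_singleton_zero hα]
    exact ⟨0, mem_singleton 0, fun q hq => by rw [mem_singleton_iff.1 hq]⟩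
  · obtain ⟨q, hq, hmin⟩ := exists_isMinOn_reducedDist α β ‖u₀‖ ‖v₀‖ γ₀
    obtain ⟨p, hp, hpq⟩ := exists_mem_Ctilde_d2_eq_reducedDist hα β (u₀, v₀, γ₀) hq
    refine ⟨p, hp, fun p' hp' => ?_⟩
    calc d2 β p (u₀, v₀, γ₀) = reducedDist α β ‖u₀‖ ‖v₀‖ γ₀ q := hpq
      _ ≤ reducedDist α β ‖u₀‖ ‖v₀‖ γ₀ (‖p'.1‖, ‖p'.2.1‖) :=
        hmin ⟨norm_nonneg p'.1, norm_nonneg p'.2.1⟩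
      _ ≤ d2 β p' (u₀, v₀, γ₀) := reducedDist_le_d2 hα β hp' (u₀, v₀, γ₀)

theorem stmt5 (α β : ℝ) (hα : α ≠ 0) (hβ : 0 < β) (u₀ v₀ : X) (γ₀ : ℝ) :
    (projSet β (Ctilde α) (u₀, v₀, γ₀)).Nonempty :=
  stmt5_general α β hα u₀ v₀ γ₀
end

section
/- If (u,v,γ) is a nearest point in C̃_α to (u₀,v₀,γ₀), then u and u₀ are conically dependent (there exists s ≥ 0 with u = s u₀ or u₀ = s u), and likewise v and v₀ are conically dependent. -/
variable {X : Type*} [NormedAddCommGroup X] [InnerProductSpace ℝ X]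

/-!
Membership of `(u, v, γ)` in `C̃_α` depends on `u` and `v` only through their norms, so a nearest
point `(u, v, γ)` to `(u₀, v₀, γ₀)` has `u` nearest to `u₀` on the sphere of radius `‖u‖`, and
likewise for `v`. In a strictly convex space such a nearest point lies on the ray of `u₀`.
-/

open Metric

theorem SameRay.exists_nonneg_smul_or {R M : Type*} [Field R] [LinearOrder R]
    [IsStrictOrderedRing R] [AddCommGroup M] [Module R M] {x y : M} (h : SameRay R x y) :
    ∃ s : R, 0 ≤ s ∧ (x = s • y ∨ y = s • x) := by
  obtain rfl | hy := eq_or_ne y 0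
  · exact ⟨0, le_rfl, Or.inr (zero_smul R x).symm⟩
  · obtain ⟨s, hs, rfl⟩ := h.exists_nonneg_right hy
    exact ⟨s, hs, Or.inl rfl⟩

/-- The rescaling of `w₀` onto the sphere through `w` is at distance `|‖w‖ - ‖w₀‖|` from `w₀`,
and in a strictly convex space only vectors on the ray of `w₀` get that close. -/
theorem sameRay_of_isMinOn_norm_sub_sphere {E : Type*} [NormedAddCommGroup E] [NormedSpace ℝ E]
    [StrictConvexSpace ℝ E] {w w₀ : E} (h : IsMinOn (‖· - w₀‖) (sphere 0 ‖w‖) w) :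
    SameRay ℝ w w₀ := by
  obtain rfl | hw₀ := eq_or_ne w₀ 0
  · exact SameRay.zero_right w
  set w' := (‖w‖ / ‖w₀‖) • w₀
  have hw' : ‖w'‖ = ‖w‖ := by
    rw [norm_smul, Real.norm_of_nonneg (by positivity), div_mul_cancel₀ _ (norm_ne_zero_iff.2 hw₀)]
  have hray : SameRay ℝ w' w₀ := SameRay.sameRay_nonneg_smul_left w₀ (by positivity)
  rw [sameRay_iff_norm_sub]
  refine le_antisymm ?_ (abs_norm_sub_norm_le w w₀)
  calc ‖w - w₀‖ ≤ ‖w' - w₀‖ := isMinOn_iff.1 h w' (mem_sphere_zero_iff_norm.2 hw')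
    _ = |‖w‖ - ‖w₀‖| := by rw [hray.norm_sub, hw']

section Ctilde

variable {E : Type*} [NormedAddCommGroup E] {α β γ γ₀ : ℝ} {u v u₀ v₀ : E}

theorem mem_Ctilde_congr_norm {u' v' : E} (hu : ‖u'‖ = ‖u‖) (hv : ‖v'‖ = ‖v‖) :
    (u', v', γ) ∈ Ctilde α ↔ (u, v, γ) ∈ Ctilde α := by
  simp only [Ctilde, Set.mem_ofPred_eq, hu, hv]

theorem isMinOn_fst_of_mem_projSet_Ctilde (h : (u, v, γ) ∈ projSet β (Ctilde α) (u₀, v₀, γ₀)) :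
    IsMinOn (‖· - u₀‖) (sphere 0 ‖u‖) u := by
  refine isMinOn_iff.2 fun u' hu' => ?_
  have hle := h.2 (u', v, γ) ((mem_Ctilde_congr_norm (mem_sphere_zero_iff_norm.1 hu') rfl).2 h.1)
  simp only [d2] at hle
  exact (pow_le_pow_iff_left₀ (norm_nonneg _) (norm_nonneg _) two_ne_zero).1 (by linarith)

theorem isMinOn_snd_of_mem_projSet_Ctilde (h : (u, v, γ) ∈ projSet β (Ctilde α) (u₀, v₀, γ₀)) :
    IsMinOn (‖· - v₀‖) (sphere 0 ‖v‖) v := by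
  refine isMinOn_iff.2 fun v' hv' => ?_
  have hle := h.2 (u, v', γ) ((mem_Ctilde_congr_norm rfl (mem_sphere_zero_iff_norm.1 hv')).2 h.1)
  simp only [d2] at hle
  exact (pow_le_pow_iff_left₀ (norm_nonneg _) (norm_nonneg _) two_ne_zero).1 (by linarith)

end Ctilde

theorem stmt6_general (α β : ℝ) (u₀ v₀ : X) (γ₀ : ℝ)
    (u v : X) (γ : ℝ) (h : (u, v, γ) ∈ projSet β (Ctilde α) (u₀, v₀, γ₀)) :
    (∃ s : ℝ, 0 ≤ s ∧ (u = s • u₀ ∨ u₀ = s • u)) ∧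
    (∃ s : ℝ, 0 ≤ s ∧ (v = s • v₀ ∨ v₀ = s • v)) :=
  ⟨(sameRay_of_isMinOn_norm_sub_sphere
      (isMinOn_fst_of_mem_projSet_Ctilde h)).exists_nonneg_smul_or,
    (sameRay_of_isMinOn_norm_sub_sphere
      (isMinOn_snd_of_mem_projSet_Ctilde h)).exists_nonneg_smul_or⟩

theorem stmt6 (α β : ℝ) (hα : α ≠ 0) (hβ : 0 < β) (u₀ v₀ : X) (γ₀ : ℝ)
    (u v : X) (γ : ℝ) (h : (u, v, γ) ∈ projSet β (Ctilde α) (u₀, v₀, γ₀)) :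
    (∃ s : ℝ, 0 ≤ s ∧ (u = s • u₀ ∨ u₀ = s • u)) ∧
    (∃ s : ℝ, 0 ≤ s ∧ (v = s • v₀ ∨ v₀ = s • v)) :=
  stmt6_general α β u₀ v₀ γ₀ u v γ h
end

section
/- Let ‖v₀‖ > 0, α ≠ 0, β > 0, γ₀ ∈ ℝ, and define g₁(λ) = ‖v₀‖²/(1−λ)² + 2λα²/β² + 2αγ₀ on (−∞,1). Then g₁ is strictly increasing on (−∞,1); moreover, if α(γ₀ − α/β²) < −‖v₀‖²/8 then g₁ has a unique zero in (−1,1), while if α(γ₀ − α/β²) > −‖v₀‖²/8 then g₁ has a unique zero in (−∞,−1). -/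
theorem stmt8 (n α β γ₀ : ℝ) (hn : 0 < n) (hα : α ≠ 0) (hβ : 0 < β)
    (g₁ : ℝ → ℝ)
    (hg : ∀ l, g₁ l = n^2 / (1 - l)^2 + 2 * l * α^2 / β^2 + 2 * α * γ₀) :
    StrictMonoOn g₁ (Set.Iio (1 : ℝ)) ∧
    (α * (γ₀ - α / β^2) < -n^2 / 8 → ∃! l, l ∈ Set.Ioo (-1 : ℝ) 1 ∧ g₁ l = 0) ∧
    (α * (γ₀ - α / β^2) > -n^2 / 8 → ∃! l, l ∈ Set.Iio (-1 : ℝ) ∧ g₁ l = 0) := by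
  have hβ0 : β ≠ 0 := ne_of_gt hβ
  have hβ2 : (0:ℝ) < β^2 := by positivity
  have hα2 : (0:ℝ) < α^2 := by positivity
  -- strict monotonicity
  have hmono : StrictMonoOn g₁ (Set.Iio (1:ℝ)) := by
    intro x hx y hy hxy
    simp only [Set.mem_Iio] at hx hy
    rw [hg x, hg y]
    have h1 : 0 < 1 - y := by linarith
    have hsq : (1-y)^2 < (1-x)^2 := by nlinarith
    have hA : n^2/(1-x)^2 < n^2/(1-y)^2 :=
      div_lt_div_of_pos_left (by positivity) (by positivity) hsq
    have hB : 2*x*α^2/β^2 < 2*y*α^2/β^2 := by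
      apply div_lt_div_of_pos_right ?_ hβ2
      nlinarith
    linarith
  -- continuity on compact intervals avoiding 1
  have hcont : ∀ a b : ℝ, b < 1 → ContinuousOn g₁ (Set.Icc a b) := by
    intro a b hb
    have he : g₁ = fun l => n^2 / (1 - l)^2 + 2 * l * α^2 / β^2 + 2 * α * γ₀ :=
      funext hg
    rw [he]
    apply ContinuousOn.add
    apply ContinuousOn.add
    · apply ContinuousOn.div continuousOn_const (by fun_prop)
      intro x hx
      have : x ≤ b := hx.2
      have : 0 < 1 - x := by linarith
      positivity
    · fun_prop
    · fun_prop
  have hval : g₁ (-1) = n^2/4 + 2*(α*(γ₀ - α/β^2)) := by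
    rw [hg]; field_simp; ring
  refine ⟨hmono, ?_, ?_⟩
  · intro hc
    have hga : g₁ (-1) < 0 := by rw [hval]; linarith
    -- find b with g₁ b > 0
    set M : ℝ := 2*|α*γ₀| + 1 with hM
    have hM1 : (1:ℝ) ≤ M := by have := abs_nonneg (α*γ₀); simp only [hM]; linarith
    set δ : ℝ := min 1 (n^2/M) with hδ
    have hδ0 : 0 < δ := lt_min one_pos (by positivity)
    have hδ1 : δ ≤ 1 := min_le_left _ _
    have hδM : n^2/δ^2 ≥ M := by
      have h1 : δ^2 ≤ δ := by nlinarith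
      have h2 : n^2/δ ≥ M := by
        rw [ge_iff_le, le_div_iff₀ hδ0]
        have : δ ≤ n^2/M := min_le_right _ _
        calc M * δ ≤ M * (n^2/M) := by nlinarith
          _ = n^2 := by field_simp
      calc M ≤ n^2/δ := h2
        _ ≤ n^2/δ^2 := by
            apply div_le_div_of_nonneg_left (by positivity) (by positivity) h1
    set b : ℝ := 1 - δ with hb
    have hb1 : b < 1 := by simp [hb]; linarith
    have hgb : 0 < g₁ b := by
      rw [hg]
      have e1 : 1 - b = δ := by simp [hb]
      rw [e1]
      have h3 : 0 ≤ 2*b*α^2/β^2 := by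
        apply div_nonneg _ (le_of_lt hβ2)
        have : 0 ≤ b := by simp [hb]; linarith
        positivity
      have h4 : -(M - 1) ≤ 2*α*γ₀ := by
        have := abs_le.mp (le_refl |α*γ₀|) |>.1
        have h5 : -|α*γ₀| ≤ α*γ₀ := neg_abs_le _
        simp only [hM]; nlinarith
      linarith
    have hab : (-1:ℝ) ≤ b := by simp [hb]; linarith
    have hivt := intermediate_value_Icc hab (hcont (-1) b hb1)
    have h0 : (0:ℝ) ∈ Set.Icc (g₁ (-1)) (g₁ b) := ⟨le_of_lt hga, le_of_lt hgb⟩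
    obtain ⟨l, hl, hgl⟩ := hivt h0
    have hl1 : l < 1 := lt_of_le_of_lt hl.2 hb1
    have hlm1 : -1 < l := by
      rcases eq_or_lt_of_le hl.1 with h | h
      · exfalso; rw [← h] at hgl; linarith
      · exact h
    refine ⟨l, ⟨⟨hlm1, hl1⟩, hgl⟩, ?_⟩
    rintro l' ⟨⟨hl'1, hl'2⟩, hgl'⟩
    exact hmono.injOn (Set.mem_Iio.mpr hl'2) (Set.mem_Iio.mpr hl1) (by rw [hgl', hgl])
  · intro hc
    have hgb : 0 < g₁ (-1) := by rw [hval]; linarith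
    set a : ℝ := -max 2 (β^2*(n^2/4 + 2*α*γ₀ + 1)/(2*α^2)) with ha
    have ha2 : a ≤ -2 := by
      simp only [ha, neg_le_neg_iff]
      exact le_max_left _ _
    have hga : g₁ a < 0 := by
      rw [hg]
      have h1 : (2:ℝ)^2 ≤ (1-a)^2 := by nlinarith
      have h2 : n^2/(1-a)^2 ≤ n^2/4 := by
        apply div_le_div_of_nonneg_left (by positivity) (by norm_num) (by norm_num at h1 ⊢; linarith)
      have h3 : a ≤ -(β^2*(n^2/4 + 2*α*γ₀ + 1)/(2*α^2)) := by
        simp only [ha, neg_le_neg_iff]; exact le_max_right _ _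
      have h4 : 2*a*α^2/β^2 ≤ -(n^2/4 + 2*α*γ₀ + 1) := by
        rw [div_le_iff₀ hβ2]
        have h5 := mul_le_mul_of_nonneg_right h3 (le_of_lt (by positivity : (0:ℝ) < 2*α^2))
        calc 2*a*α^2 = a * (2*α^2) := by ring
          _ ≤ -(β^2*(n^2/4 + 2*α*γ₀ + 1)/(2*α^2)) * (2*α^2) := h5
          _ = -(n^2/4 + 2*α*γ₀ + 1) * β^2 := by field_simp
      linarith
    have hab : a ≤ -1 := by linarith
    have hivt := intermediate_value_Icc hab (hcont a (-1) (by norm_num))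
    have h0 : (0:ℝ) ∈ Set.Icc (g₁ a) (g₁ (-1)) := ⟨le_of_lt hga, le_of_lt hgb⟩
    obtain ⟨l, hl, hgl⟩ := hivt h0
    have hl1 : l < -1 := by
      rcases eq_or_lt_of_le hl.2 with h | h
      · exfalso; rw [h] at hgl; linarith
      · exact h
    refine ⟨l, ⟨Set.mem_Iio.mpr hl1, hgl⟩, ?_⟩
    rintro l' ⟨hl', hgl'⟩
    have hl'1 : l' < -1 := Set.mem_Iio.mp hl'
    exact hmono.injOn (Set.mem_Iio.mpr (by linarith)) (Set.mem_Iio.mpr (by linarith)) (by rw [hgl', hgl])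
end

section
/- Suppose u₀ = 0, v₀ ≠ 0, and α(γ₀ − α/β²) ≥ −‖v₀‖²/8. Then the projection of (0, v₀, γ₀) onto C̃_α equals {(u, v₀/2, γ₀ − α/β²) : u ∈ X, ‖u‖ = √(2α(γ₀ − α/β²) + ‖v₀‖²/4)}; this set is a singleton if and only if α(γ₀ − α/β²) = −‖v₀‖²/8. -/
/-!
On `C̃_α` the constraint `‖u‖² = ‖v‖² + 2αγ` eliminates `u` from the distance to `(0, v₀, γ₀)`,
and completing squares in `v` and `γ` gives
`d² = 2‖v - v₀/2‖² + β²(γ - (γ₀ - α/β²))² + const`.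
The nearest points are therefore the points of `C̃_α` with `v = v₀/2` and `γ = γ₀ - α/β²`,
i.e. the `u` on a sphere of radius `√(2α(γ₀ - α/β²) + ‖v₀‖²/4)`; in a nontrivial space such a
sphere is a single point exactly when its radius vanishes.
-/

variable {X : Type*} [NormedAddCommGroup X] [InnerProductSpace ℝ X]

open Metric

theorem sphere_zero_subsingleton_iff {E : Type*} [NormedAddCommGroup E] [NormedSpace ℝ E]
    [Nontrivial E] {r : ℝ} (hr : 0 ≤ r) : (sphere (0 : E) r).Subsingleton ↔ r = 0 := by
  refine ⟨fun hsub => ?_, fun hr0 => subsingleton_sphere 0 hr0.le⟩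
  obtain ⟨u, hu⟩ := (NormedSpace.sphere_nonempty (x := (0 : E))).mpr hr
  have hneg : -u ∈ sphere (0 : E) r := by simpa using hu
  have h2u : (2 : ℝ) • u = 0 := by
    rw [two_smul, ← eq_neg_iff_add_eq_zero]
    exact hsub hu hneg
  have hu0 : u = 0 := (smul_eq_zero.mp h2u).resolve_left two_ne_zero
  simpa [hu0, eq_comm] using hu

theorem setOf_exists_norm_eq_and_eq {E F : Type*} [NormedAddCommGroup E] (f : E → F) (r : ℝ) :
    {p | ∃ u : E, ‖u‖ = r ∧ p = f u} = f '' sphere 0 r := by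
  ext p
  simp [eq_comm]

theorem projSet_eq_of_d2_eq_add {E : Type*} [NormedAddCommGroup E] {β : ℝ}
    {S : Set (E × E × ℝ)} {z : E × E × ℝ} (g : E × E × ℝ → ℝ) (c : ℝ)
    (hd2 : ∀ q ∈ S, d2 β q z = g q + c) (hg : ∀ q ∈ S, 0 ≤ g q) (hzero : ∃ q ∈ S, g q = 0) :
    projSet β S z = {p | p ∈ S ∧ g p = 0} := by
  obtain ⟨q₀, hq₀, hgq₀⟩ := hzero
  ext p
  refine ⟨fun ⟨hp, hmin⟩ => ⟨hp, ?_⟩, fun ⟨hp, hgp⟩ => ⟨hp, fun q hq => ?_⟩⟩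
  · have := hmin q₀ hq₀
    rw [hd2 p hp, hd2 q₀ hq₀, hgq₀] at this
    linarith [hg p hp]
  · rw [hd2 p hp, hd2 q hq, hgp]
    linarith [hg q hq]

theorem norm_half_smul_sq {E : Type*} [NormedAddCommGroup E] [NormedSpace ℝ E] (v : E) :
    ‖(2 : ℝ)⁻¹ • v‖ ^ 2 = ‖v‖ ^ 2 / 4 := by
  rw [norm_smul, Real.norm_eq_abs, abs_of_pos (by norm_num)]
  ring

theorem d2_zero_eq_of_mem_Ctilde {α β γ₀ : ℝ} (hβ : β ≠ 0) (v₀ : X) {q : X × X × ℝ}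
    (hq : q ∈ Ctilde α) :
    d2 β q ((0 : X), v₀, γ₀) =
      2 * ‖q.2.1 - (2 : ℝ)⁻¹ • v₀‖ ^ 2 + β ^ 2 * (q.2.2 - (γ₀ - α / β ^ 2)) ^ 2
        + (‖v₀‖ ^ 2 / 2 + 2 * α * γ₀ - α ^ 2 / β ^ 2) := by
  obtain ⟨u, v, γ⟩ := q
  have hu : ‖u‖ ^ 2 = ‖v‖ ^ 2 + 2 * α * γ := by
    simp only [Ctilde, Set.mem_ofPred_eq] at hq
    linarith
  simp only [d2, sub_zero, hu, norm_sub_sq_real, real_inner_smul_right, norm_half_smul_sq]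
  field_simp
  ring

theorem two_mul_norm_sub_sq_add_mul_sq_eq_zero_iff {E : Type*} [NormedAddCommGroup E]
    {β a : ℝ} (hβ : β ≠ 0) (v w : E) :
    2 * ‖v - w‖ ^ 2 + β ^ 2 * a ^ 2 = 0 ↔ v = w ∧ a = 0 := by
  rw [add_eq_zero_iff_of_nonneg (by positivity) (by positivity)]
  simp [hβ, sub_eq_zero]

theorem projSet_Ctilde_zero_eq [Nontrivial X] {α β γ₀ : ℝ} (hβ : β ≠ 0) {v₀ : X}
    (hR : 0 ≤ 2 * α * (γ₀ - α / β ^ 2) + ‖v₀‖ ^ 2 / 4) :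
    projSet β (Ctilde α) ((0 : X), v₀, γ₀) =
      {p | ∃ u : X, ‖u‖ = √(2 * α * (γ₀ - α / β ^ 2) + ‖v₀‖ ^ 2 / 4) ∧
        p = (u, (2 : ℝ)⁻¹ • v₀, γ₀ - α / β ^ 2)} := by
  set γ' := γ₀ - α / β ^ 2 with hγ'
  set R := 2 * α * γ' + ‖v₀‖ ^ 2 / 4 with hR_def
  have hmem : ∀ u : X, (u, (2 : ℝ)⁻¹ • v₀, γ') ∈ Ctilde α ↔ ‖u‖ = √R := by
    intro u
    rw [eq_comm, Real.sqrt_eq_iff_eq_sq hR (norm_nonneg u)]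
    simp only [Ctilde, Set.mem_ofPred_eq, norm_half_smul_sq]
    constructor <;> intro h <;> linarith
  obtain ⟨u₀, hu₀⟩ := exists_norm_eq X (Real.sqrt_nonneg R)
  rw [projSet_eq_of_d2_eq_add _ _ (fun q hq => d2_zero_eq_of_mem_Ctilde hβ v₀ hq)
    (fun q _ => by positivity) ⟨(u₀, (2 : ℝ)⁻¹ • v₀, γ'), (hmem u₀).mpr hu₀, by simp [hγ']⟩]
  ext ⟨u, v, γ⟩
  simp only [Set.mem_ofPred_eq, two_mul_norm_sub_sq_add_mul_sq_eq_zero_iff hβ, sub_eq_zero,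
    Prod.mk.injEq]
  constructor
  · rintro ⟨hC, rfl, rfl⟩
    exact ⟨u, (hmem u).mp hC, rfl, rfl, rfl⟩
  · rintro ⟨u, hu, rfl, rfl, rfl⟩
    exact ⟨(hmem u).mpr hu, rfl, rfl⟩

theorem stmt11_general (α β γ₀ : ℝ) (hβ : 0 < β) (v₀ : X) (hv : v₀ ≠ 0)
    (hcase : α * (γ₀ - α / β^2) ≥ -‖v₀‖^2 / 8) :
    projSet β (Ctilde α) ((0 : X), v₀, γ₀) =
      {p : X × X × ℝ | ∃ u : X,
        ‖u‖ = Real.sqrt (2 * α * (γ₀ - α / β^2) + ‖v₀‖^2 / 4) ∧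
        p = (u, (2 : ℝ)⁻¹ • v₀, γ₀ - α / β^2)} ∧
    ((∃ p, projSet β (Ctilde α) ((0 : X), v₀, γ₀) = {p}) ↔
      α * (γ₀ - α / β^2) = -‖v₀‖^2 / 8) := by
  have : Nontrivial X := nontrivial_of_ne v₀ 0 hv
  have hR : 0 ≤ 2 * α * (γ₀ - α / β ^ 2) + ‖v₀‖ ^ 2 / 4 := by linarith
  have hproj := projSet_Ctilde_zero_eq hβ.ne' hR
  refine ⟨hproj, ?_⟩
  rw [hproj, Set.exists_eq_singleton_iff_nonempty_subsingleton, setOf_exists_norm_eq_and_eq,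
    Set.image_nonempty, (Prod.mk_left_injective _).subsingleton_image_iff,
    NormedSpace.sphere_nonempty, sphere_zero_subsingleton_iff (Real.sqrt_nonneg _),
    Real.sqrt_eq_zero hR]
  constructor
  · rintro ⟨-, h⟩
    linarith
  · intro h
    exact ⟨Real.sqrt_nonneg _, by linarith⟩

theorem stmt11 (α β γ₀ : ℝ) (hα : α ≠ 0) (hβ : 0 < β) (v₀ : X) (hv : v₀ ≠ 0)
    (hcase : α * (γ₀ - α / β^2) ≥ -‖v₀‖^2 / 8) :
    projSet β (Ctilde α) ((0 : X), v₀, γ₀) =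
      {p : X × X × ℝ | ∃ u : X,
        ‖u‖ = Real.sqrt (2 * α * (γ₀ - α / β^2) + ‖v₀‖^2 / 4) ∧
        p = (u, (2 : ℝ)⁻¹ • v₀, γ₀ - α / β^2)} ∧
    ((∃ p, projSet β (Ctilde α) ((0 : X), v₀, γ₀) = {p}) ↔
      α * (γ₀ - α / β^2) = -‖v₀‖^2 / 8) :=
  stmt11_general α β γ₀ hβ v₀ hv hcase
end

section
/- If |αγ₀| ≤ α²/β², then the unique nearest point of C̃_α to (0,0,γ₀) is (0,0,0). -/
variable {X : Type*} [NormedAddCommGroup X] [InnerProductSpace ℝ X]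

/-!
Write `p = (u, v, γ)` and `z = (0, 0, γ₀)`. On `C̃_α` we have
`‖u‖² + ‖v‖² ≥ |‖u‖² - ‖v‖²| = 2|α||γ|`, and the hypothesis says `β²|γ₀| ≤ |α|`,
so the cross term `-2β²γγ₀` of `β²(γ - γ₀)²` is absorbed by `‖u‖² + ‖v‖²`. This gives
`d2 β p z ≥ β²γ₀² + β²γ² = d2 β 0 z + β²γ²`, so a nearest point has `γ = 0`, and then
`d2 β p z = ‖u‖² + ‖v‖² + β²γ₀²` forces `u = v = 0`.
-/

section

omit [InnerProductSpace ℝ X]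

lemma projSet_eq_singleton {β : ℝ} {S : Set (X × X × ℝ)} {z p₀ : X × X × ℝ} (hp₀ : p₀ ∈ S)
    (hmin : ∀ q ∈ S, d2 β p₀ z ≤ d2 β q z)
    (huniq : ∀ q ∈ S, d2 β q z ≤ d2 β p₀ z → q = p₀) :
    projSet β S z = {p₀} := by
  ext q
  constructor
  · rintro ⟨hq, hqmin⟩
    exact huniq q hq (hqmin p₀ hp₀)
  · rintro rfl
    exact ⟨hp₀, hmin⟩

lemma d2_zero_zero_right (β γ₀ : ℝ) (p : X × X × ℝ) :
    d2 β p ((0 : X), (0 : X), γ₀) = ‖p.1‖^2 + ‖p.2.1‖^2 + β^2 * (p.2.2 - γ₀)^2 := by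
  simp only [d2, sub_zero]

lemma zero_mem_Ctilde (α : ℝ) : ((0 : X), (0 : X), (0 : ℝ)) ∈ Ctilde α := by
  simp [Ctilde]

lemma two_mul_abs_mul_abs_le_of_mem_Ctilde {α : ℝ} {p : X × X × ℝ} (hp : p ∈ Ctilde α) :
    2 * |α| * |p.2.2| ≤ ‖p.1‖^2 + ‖p.2.1‖^2 :=
  calc 2 * |α| * |p.2.2| = |‖p.1‖^2 - ‖p.2.1‖^2| := by
        rw [hp, abs_mul, abs_mul, abs_two]
    _ ≤ |‖p.1‖^2| + |‖p.2.1‖^2| := abs_sub _ _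
    _ = ‖p.1‖^2 + ‖p.2.1‖^2 := by rw [abs_sq, abs_sq]

lemma sq_mul_abs_le_abs_of_abs_mul_le {α β γ₀ : ℝ} (hα : α ≠ 0) (hβ : β ≠ 0)
    (h : |α * γ₀| ≤ α^2 / β^2) : β^2 * |γ₀| ≤ |α| := by
  rw [le_div_iff₀ (by positivity), abs_mul] at h
  have : |α| * (β^2 * |γ₀|) ≤ |α| * |α| := by nlinarith [sq_abs α]
  exact le_of_mul_le_mul_left this (abs_pos.mpr hα)

lemma sq_add_sq_le_d2_of_mem_Ctilde {α β γ₀ : ℝ} (hbound : β^2 * |γ₀| ≤ |α|)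
    {p : X × X × ℝ} (hp : p ∈ Ctilde α) :
    β^2 * γ₀^2 + β^2 * p.2.2^2 ≤ d2 β p ((0 : X), (0 : X), γ₀) := by
  have hcross : β^2 * (p.2.2 * γ₀) ≤ |α| * |p.2.2| :=
    calc β^2 * (p.2.2 * γ₀) ≤ β^2 * (|p.2.2| * |γ₀|) :=
          mul_le_mul_of_nonneg_left (abs_mul p.2.2 γ₀ ▸ le_abs_self _) (sq_nonneg β)
      _ = |p.2.2| * (β^2 * |γ₀|) := by ring
      _ ≤ |p.2.2| * |α| := by gcongr
      _ = |α| * |p.2.2| := mul_comm _ _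
  rw [d2_zero_zero_right]
  nlinarith [two_mul_abs_mul_abs_le_of_mem_Ctilde hp]

lemma eq_zero_of_mem_Ctilde_of_d2_le {α β γ₀ : ℝ} (hβ : β ≠ 0)
    (hbound : β^2 * |γ₀| ≤ |α|) {p : X × X × ℝ} (hp : p ∈ Ctilde α)
    (hle : d2 β p ((0 : X), (0 : X), γ₀) ≤ β^2 * γ₀^2) :
    p = ((0 : X), (0 : X), (0 : ℝ)) := by
  obtain ⟨u, v, γ⟩ := p
  have hγ : γ = 0 := by
    have : β^2 * γ^2 ≤ 0 := by linarith [sq_add_sq_le_d2_of_mem_Ctilde hbound hp]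
    have : β^2 * γ^2 = 0 := le_antisymm this (by positivity)
    simpa [hβ] using this
  subst hγ
  rw [d2_zero_zero_right, zero_sub, neg_sq] at hle
  have hu : u = 0 := by
    rw [← norm_eq_zero, ← sq_eq_zero_iff]
    linarith [sq_nonneg ‖u‖, sq_nonneg ‖v‖]
  have hv : v = 0 := by
    rw [← norm_eq_zero, ← sq_eq_zero_iff]
    linarith [sq_nonneg ‖u‖, sq_nonneg ‖v‖]
  rw [hu, hv]

end

theorem stmt15 (α β γ₀ : ℝ) (hα : α ≠ 0) (hβ : 0 < β)
    (hcase : |α * γ₀| ≤ α^2 / β^2) :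
    projSet β (Ctilde α) ((0 : X), (0 : X), γ₀) =
      {((0 : X), (0 : X), (0 : ℝ))} := by
  have hbound := sq_mul_abs_le_abs_of_abs_mul_le hα hβ.ne' hcase
  have hd0 : d2 β ((0 : X), (0 : X), (0 : ℝ)) ((0 : X), (0 : X), γ₀) = β^2 * γ₀^2 := by
    simp [d2]
  refine projSet_eq_singleton (zero_mem_Ctilde α) (fun q hq => ?_) (fun q hq hle => ?_)
  · rw [hd0]
    linarith [sq_add_sq_le_d2_of_mem_Ctilde hbound hq, mul_nonneg (sq_nonneg β) (sq_nonneg q.2.2)]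
  · exact eq_zero_of_mem_Ctilde_of_d2_le hβ.ne' hbound hq (hd0 ▸ hle)
end
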